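/- (Upper semicontinuity of the large-jump part along half-relaxed limits.) Fix δ∈(0,1) and assume j(·,z) is continuous on ℝ^d for every z. Let x_k→x in ℝ^d, p_k→p in ℝ^d, and let (φ_k) be Borel functions ℝ^d→ℝ with sup_k sup_y |φ_k(y)| < ∞. Define φ̄(y) := limsup of φ_k(y') as k→∞ and y'→y, and assume moreover that φ_k(x_k) → φ̄(x). Then limsup_{k→∞} I^{2,δ}[x_k,p_k,φ_k] ≤ I^{2,δ}[x,p,φ̄]. -/

import Mathlib

open scoped RealInnerProductSpace
open Filter Metric MeasureTheory Topology

section Helpers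

/-- Reverse Fatou for uniformly bounded sequences on a finite measure space. -/
lemma revFatou {α : Type*} [MeasurableSpace α] (ν : Measure α) [IsFiniteMeasure ν]
    (f : ℕ → α → ℝ) (g : α → ℝ) (M : ℝ)
    (hf : ∀ n, Measurable (f n)) (hbd : ∀ n y, |f n y| ≤ M)
    (hg : Integrable g ν)
    (hle : ∀ y, Filter.limsup (fun n => f n y) Filter.atTop ≤ g y) :
    Filter.limsup (fun n => ∫ y, f n y ∂ν) Filter.atTop ≤ ∫ y, g y ∂ν := by
  set h : ℕ → α → ℝ := fun n y => ⨆ k, f (n + k) y with hh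
  have hbAbove : ∀ n y, BddAbove (Set.range fun k => f (n + k) y) := by
    intro n y
    exact ⟨M, by rintro _ ⟨k, rfl⟩; exact (abs_le.1 (hbd _ y)).2⟩
  have hh_le : ∀ n y, h n y ≤ M := fun n y => ciSup_le fun k => (abs_le.1 (hbd _ y)).2
  have hh_ge : ∀ n y, -M ≤ h n y := fun n y =>
    le_trans (abs_le.1 (hbd (n + 0) y)).1 (le_ciSup (hbAbove n y) 0)
  have hhm : ∀ n, Measurable (h n) := fun n => Measurable.iSup fun k => hf (n + k)
  have hanti : ∀ y, Antitone fun n => h n y := by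
    intro y n m hnm
    refine ciSup_le fun k => ?_
    have : m + k = n + (m - n + k) := by omega
    rw [this]
    exact le_ciSup (hbAbove n y) _
  set L : α → ℝ := fun y => ⨅ n, h n y with hL
  have hbBelow : ∀ y, BddBelow (Set.range fun n => h n y) := by
    intro y; exact ⟨-M, by rintro _ ⟨n, rfl⟩; exact hh_ge n y⟩
  have hLm : Measurable L := Measurable.iInf hhm
  have hL_le : ∀ y, L y ≤ M := fun y => le_trans (ciInf_le (hbBelow y) 0) (hh_le 0 y)
  have hL_ge : ∀ y, -M ≤ L y := fun y => le_ciInf fun n => hh_ge n y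
  have hL_le_g : ∀ y, L y ≤ g y := by
    intro y
    refine le_trans ?_ (hle y)
    rw [Filter.limsup_eq]
    refine le_csInf ⟨M, Eventually.of_forall fun n => (abs_le.1 (hbd n y)).2⟩ ?_
    intro a ha
    obtain ⟨N, hN⟩ := eventually_atTop.1 ha
    exact le_trans (ciInf_le (hbBelow y) N)
      (ciSup_le fun k => hN _ (Nat.le_add_right N k))
  have htend : ∀ y, Tendsto (fun n => h n y) atTop (𝓝 (L y)) := fun y =>
    tendsto_atTop_ciInf (hanti y) (hbBelow y)
  have hint_f : ∀ n, Integrable (f n) ν := fun n =>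
    (integrable_const M).mono' (hf n).aestronglyMeasurable
      (Eventually.of_forall fun y => by rw [Real.norm_eq_abs]; exact hbd n y)
  have hint_h : ∀ n, Integrable (h n) ν := fun n =>
    (integrable_const M).mono' (hhm n).aestronglyMeasurable
      (Eventually.of_forall fun y => by
        rw [Real.norm_eq_abs]; exact abs_le.2 ⟨hh_ge n y, hh_le n y⟩)
  have hint_L : Integrable L ν :=
    (integrable_const M).mono' hLm.aestronglyMeasurable
      (Eventually.of_forall fun y => by
        rw [Real.norm_eq_abs]; exact abs_le.2 ⟨hL_ge y, hL_le y⟩)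
  have hdct : Tendsto (fun n => ∫ y, h n y ∂ν) atTop (𝓝 (∫ y, L y ∂ν)) := by
    refine tendsto_integral_of_dominated_convergence (fun _ => M)
      (fun n => (hhm n).aestronglyMeasurable) (integrable_const M)
      (fun n => Eventually.of_forall fun y => by
        rw [Real.norm_eq_abs]; exact abs_le.2 ⟨hh_ge n y, hh_le n y⟩)
      (Eventually.of_forall htend)
  have hmono : ∀ n, ∫ y, f n y ∂ν ≤ ∫ y, h n y ∂ν := fun n =>
    integral_mono (hint_f n) (hint_h n) fun y => by
      simpa using le_ciSup (hbAbove n y) 0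
  calc Filter.limsup (fun n => ∫ y, f n y ∂ν) atTop
      ≤ Filter.limsup (fun n => ∫ y, h n y ∂ν) atTop := by
        refine limsup_le_limsup (Eventually.of_forall hmono) ?_ ?_
        · refine Filter.IsBoundedUnder.isCoboundedUnder_le ⟨-(M * (ν Set.univ).toReal), ?_⟩
          refine eventually_map.2 (Eventually.of_forall fun n => ?_)
          have := norm_integral_le_of_norm_le (μ := ν) (f := f n) (g := fun _ => M)
            (integrable_const M)
            (Eventually.of_forall fun y => by rw [Real.norm_eq_abs]; exact hbd n y)
          rw [integral_const, smul_eq_mul] at this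
          have := (abs_le.1 this).1
          rw [show ν.real Set.univ = (ν Set.univ).toReal from rfl] at this
          linarith
        · exact hdct.isBoundedUnder_le
    _ = ∫ y, L y ∂ν := hdct.limsup_eq
    _ ≤ ∫ y, g y ∂ν := integral_mono hint_L hg hL_le_g

/-- limsup along a composition is at most the limsup along the target filter. -/
lemma limsup_comp_le {β : Type*} {F : Filter β} [F.NeBot] (ψ : ℕ → β)
    (hψ : Tendsto ψ atTop F) (Φ : β → ℝ) (C : ℝ) (hC : ∀ b, |Φ b| ≤ C) :
    Filter.limsup (fun k => Φ (ψ k)) Filter.atTop ≤ Filter.limsup Φ F := by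
  have h1 : Filter.limsup (fun k => Φ (ψ k)) Filter.atTop
      = Filter.limsup Φ (Filter.map ψ Filter.atTop) := by
    rw [Filter.limsup, Filter.limsup, Filter.map_map]
    rfl
  rw [h1]
  refine limsup_le_limsup_of_le hψ ?_ ?_
  · exact Filter.IsBoundedUnder.isCoboundedUnder_le
      ⟨-C, eventually_map.2 (Eventually.of_forall fun b => (abs_le.1 (hC b)).1)⟩
  · exact ⟨C, eventually_map.2 (Eventually.of_forall fun b => (abs_le.1 (hC b)).2)⟩

/-- limsup of a sum with a convergent sequence. -/
lemma limsup_add_tendsto_le {a e : ℕ → ℝ} {C D : ℝ} (ha : ∀ k, |a k| ≤ C)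
    (he : Tendsto e atTop (𝓝 D)) :
    Filter.limsup (fun k => a k + e k) Filter.atTop ≤ Filter.limsup a Filter.atTop + D := by
  have hbddA : Filter.IsBoundedUnder (· ≤ ·) Filter.atTop a :=
    ⟨C, eventually_map.2 (Eventually.of_forall fun k => (abs_le.1 (ha k)).2)⟩
  refine le_of_forall_pos_le_add fun ε hε => ?_
  have h1 : ∀ᶠ k in atTop, a k < Filter.limsup a Filter.atTop + ε / 2 :=
    eventually_lt_of_limsup_lt (lt_add_of_pos_right _ (by linarith)) hbddA
  have h2 : ∀ᶠ k in atTop, e k < D + ε / 2 := he.eventually_lt_const (by linarith)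
  have h3 : ∀ᶠ k in atTop, D - 1 < e k := he.eventually_const_lt (by linarith)
  have hcob : Filter.IsCoboundedUnder (· ≤ ·) Filter.atTop (fun k => a k + e k) := by
    refine Filter.IsBoundedUnder.isCoboundedUnder_le ⟨-C + (D - 1), ?_⟩
    refine eventually_map.2 (h3.mono fun k hk => ?_)
    have := (abs_le.1 (ha k)).1
    linarith
  refine limsup_le_of_le hcob ?_
  filter_upwards [h1, h2] with k hk1 hk2
  linarith

end Helpers

/-- The large-jumps part `I^{2,δ}[x,p,w]` of the Lévy–Itô operator. -/
noncomputable def I2 {d : ℕ} (μ : Measure (EuclideanSpace ℝ (Fin d)))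
    (j : EuclideanSpace ℝ (Fin d) → EuclideanSpace ℝ (Fin d) → EuclideanSpace ℝ (Fin d))
    (δ : ℝ) (x p : EuclideanSpace ℝ (Fin d)) (w : EuclideanSpace ℝ (Fin d) → ℝ) : ℝ :=
  ∫ z in {z : EuclideanSpace ℝ (Fin d) | δ < ‖z‖},
    (w (x + j x z) - w x -
      ⟪p, j x z⟫ * (closedBall (0 : EuclideanSpace ℝ (Fin d)) 1).indicator (fun _ => (1:ℝ)) z) ∂μ

/-- upper semicontinuity of the large-jump part along half-relaxed limits. -/
theorem statement16 {d : ℕ} (μ : Measure (EuclideanSpace ℝ (Fin d)))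
    (hLevy : ∫⁻ z, ENNReal.ofReal (min (‖z‖ ^ 2) 1) ∂μ < ⊤)
    (cb : ℝ) (hcb : 0 < cb)
    (j : EuclideanSpace ℝ (Fin d) → EuclideanSpace ℝ (Fin d) → EuclideanSpace ℝ (Fin d))
    (hjm : Measurable (Function.uncurry j))
    (hjb : ∀ x z, ‖j x z‖ ≤ cb * ‖z‖)
    (hjc : ∀ z, Continuous fun x => j x z)
    (δ : ℝ) (hδ0 : 0 < δ) (hδ1 : δ < 1)
    (xk pk : ℕ → EuclideanSpace ℝ (Fin d)) (x p : EuclideanSpace ℝ (Fin d))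
    (hx : Tendsto xk atTop (𝓝 x)) (hp : Tendsto pk atTop (𝓝 p))
    (φk : ℕ → EuclideanSpace ℝ (Fin d) → ℝ)
    (hφm : ∀ k, Measurable (φk k)) (hφb : ∃ C, ∀ k y, |φk k y| ≤ C)
    (φbar : EuclideanSpace ℝ (Fin d) → ℝ)
    (hφbar : φbar = fun y => Filter.limsup
      (fun q : ℕ × EuclideanSpace ℝ (Fin d) => φk q.1 q.2) (atTop ×ˢ 𝓝 y))
    (hconv : Tendsto (fun k => φk k (xk k)) atTop (𝓝 (φbar x))) :
    Filter.limsup (fun k => I2 μ j δ (xk k) (pk k) (φk k)) atTop ≤ I2 μ j δ x p φbar := by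
  classical
  obtain ⟨C, hC⟩ := hφb
  have hC0 : 0 ≤ C := (abs_nonneg _).trans (hC 0 0)
  set Φ : ℕ × EuclideanSpace ℝ (Fin d) → ℝ := fun q => φk q.1 q.2 with hΦ
  have hΦabs : ∀ q, |Φ q| ≤ C := fun q => hC q.1 q.2
  have hφb' : ∀ y, φbar y = Filter.limsup Φ (atTop ×ˢ 𝓝 y) := fun y => by rw [hφbar]
  -- bound on pk
  obtain ⟨P0, hP0⟩ : BddAbove (Set.range fun k => ‖pk k‖) := hp.norm.bddAbove_range
  set P : ℝ := max P0 ‖p‖ with hPdef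
  have hPk : ∀ k, ‖pk k‖ ≤ P := fun k =>
    le_trans (hP0 (Set.mem_range_self k)) (le_max_left _ _)
  have hPp : ‖p‖ ≤ P := le_max_right _ _
  have hP0' : (0:ℝ) ≤ P := (norm_nonneg p).trans hPp
  set M : ℝ := 2 * C + P * cb with hM
  -- the indicator
  set ind : EuclideanSpace ℝ (Fin d) → ℝ := (closedBall (0 : EuclideanSpace ℝ (Fin d)) 1).indicator (fun _ => (1:ℝ)) with hind
  -- uniform bound on the integrand
  have hbound : ∀ (φ : EuclideanSpace ℝ (Fin d) → ℝ), (∀ y, |φ y| ≤ C) → ∀ (pv : EuclideanSpace ℝ (Fin d)), ‖pv‖ ≤ P →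
      ∀ (x0 z : EuclideanSpace ℝ (Fin d)), |φ (x0 + j x0 z) - φ x0 - ⟪pv, j x0 z⟫ * ind z| ≤ M := by
    intro φ hφ pv hpv x0 z
    have hin : |⟪pv, j x0 z⟫ * ind z| ≤ P * cb := by
      by_cases hz : z ∈ closedBall (0 : EuclideanSpace ℝ (Fin d)) 1
      · have hz1 : ‖z‖ ≤ 1 := by rwa [mem_closedBall_zero_iff] at hz
        rw [hind, Set.indicator_of_mem hz, mul_one]
        calc |⟪pv, j x0 z⟫| ≤ ‖pv‖ * ‖j x0 z‖ := abs_real_inner_le_norm _ _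
          _ ≤ P * (cb * ‖z‖) := by
              exact mul_le_mul hpv (hjb x0 z) (norm_nonneg _) hP0'
          _ ≤ P * (cb * 1) := by
              exact mul_le_mul_of_nonneg_left
                (mul_le_mul_of_nonneg_left hz1 hcb.le) hP0'
          _ = P * cb := by ring
      · rw [hind, Set.indicator_of_notMem hz, mul_zero, abs_zero]
        positivity
    have h1 := abs_le.1 (hφ (x0 + j x0 z))
    have h2 := abs_le.1 (hφ x0)
    have h3 := abs_le.1 hin
    rw [hM]
    rw [abs_le]
    constructor <;> nlinarith [h1.1, h1.2, h2.1, h2.2, h3.1, h3.2]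
  -- bound on φbar
  have hφbarabs : ∀ y, |φbar y| ≤ C := by
    intro y
    rw [abs_le, hφb' y]
    constructor
    · refine le_limsup_of_frequently_le
        ((Eventually.of_forall fun q => (abs_le.1 (hΦabs q)).1).frequently) ?_
      exact ⟨C, eventually_map.2 (Eventually.of_forall fun q => (abs_le.1 (hΦabs q)).2)⟩
    · refine limsup_le_of_le ?_ (Eventually.of_forall fun q => (abs_le.1 (hΦabs q)).2)
      exact Filter.IsBoundedUnder.isCoboundedUnder_le
        ⟨-C, eventually_map.2 (Eventually.of_forall fun q => (abs_le.1 (hΦabs q)).1)⟩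
  -- upper semicontinuity of φbar
  have husc : UpperSemicontinuous φbar := by
    intro y c hc
    set c' : ℝ := (φbar y + c) / 2 with hc'def
    have hc1 : φbar y < c' := by rw [hc'def]; linarith
    have hc2 : c' < c := by rw [hc'def]; linarith
    have hbdd : Filter.IsBoundedUnder (· ≤ ·) (atTop ×ˢ 𝓝 y) Φ :=
      ⟨C, eventually_map.2 (Eventually.of_forall fun q => (abs_le.1 (hΦabs q)).2)⟩
    have hev : ∀ᶠ q in atTop ×ˢ 𝓝 y, Φ q < c' := by
      refine eventually_lt_of_limsup_lt ?_ hbdd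
      rw [← hφb' y]; exact hc1
    rw [Filter.eventually_prod_iff] at hev
    obtain ⟨pa, hpa, pb, hpb, hpab⟩ := hev
    obtain ⟨V, hVp, hVopen, hyV⟩ := _root_.eventually_nhds_iff.1 hpb
    filter_upwards [hVopen.mem_nhds hyV] with y'' hy''
    have hVmem : V ∈ 𝓝 y'' := hVopen.mem_nhds hy''
    have hkey : Filter.limsup Φ (atTop ×ˢ 𝓝 y'') ≤ c' := by
      refine limsup_le_of_le ?_ ?_
      · exact Filter.IsBoundedUnder.isCoboundedUnder_le
          ⟨-C, eventually_map.2 (Eventually.of_forall fun q => (abs_le.1 (hΦabs q)).1)⟩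
      · have hmem : {q : ℕ × EuclideanSpace ℝ (Fin d) | Φ q < c'} ∈ atTop ×ˢ 𝓝 y'' := by
          refine mem_of_superset (prod_mem_prod hpa hVmem) ?_
          rintro ⟨k, y'⟩ ⟨h1, h2⟩
          exact hpab h1 (hVp _ h2)
        exact (eventually_iff.2 hmem).mono fun q hq => hq.le
    rw [hφb' y'']
    exact lt_of_le_of_lt hkey hc2
  have hφbarm : Measurable φbar := husc.measurable
  -- the set of large jumps
  set S : Set (EuclideanSpace ℝ (Fin d)) := {z : EuclideanSpace ℝ (Fin d) | δ < ‖z‖} with hSdef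
  have hSmeas : MeasurableSet S := measurableSet_lt measurable_const measurable_norm
  -- finiteness of μ on S
  have hμS : μ S < ⊤ := by
    have key : ENNReal.ofReal (δ ^ 2) * μ S ≤ ∫⁻ z, ENNReal.ofReal (min (‖z‖ ^ 2) 1) ∂μ := by
      calc ENNReal.ofReal (δ ^ 2) * μ S = ∫⁻ _ in S, ENNReal.ofReal (δ ^ 2) ∂μ :=
            (setLIntegral_const _ _).symm
        _ ≤ ∫⁻ z in S, ENNReal.ofReal (min (‖z‖ ^ 2) 1) ∂μ := by
            refine setLIntegral_mono
              (ENNReal.measurable_ofReal.comp ((measurable_norm.pow_const 2).min measurable_const))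
              fun z hz => ?_
            refine ENNReal.ofReal_le_ofReal (le_min ?_ ?_)
            · exact pow_le_pow_left₀ hδ0.le hz.le 2
            · calc δ ^ 2 ≤ 1 ^ 2 := pow_le_pow_left₀ hδ0.le (le_of_lt hδ1) 2
                _ = 1 := one_pow 2
        _ ≤ ∫⁻ z, ENNReal.ofReal (min (‖z‖ ^ 2) 1) ∂μ := setLIntegral_le_lintegral _ _
    by_contra hcon
    rw [not_lt, top_le_iff] at hcon
    rw [hcon, ENNReal.mul_top (by
      simp only [ne_eq, ENNReal.ofReal_eq_zero, not_le]
      positivity)] at key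
    exact absurd (key.trans_lt hLevy) (lt_irrefl ⊤)
  have : IsFiniteMeasure (μ.restrict S) := ⟨by rwa [Measure.restrict_apply_univ]⟩
  -- integrands
  set f : ℕ → EuclideanSpace ℝ (Fin d) → ℝ := fun k z =>
    φk k (xk k + j (xk k) z) - φk k (xk k) - ⟪pk k, j (xk k) z⟫ * ind z with hf
  set g : EuclideanSpace ℝ (Fin d) → ℝ := fun z => φbar (x + j x z) - φbar x - ⟪p, j x z⟫ * ind z with hg
  have hjsec : ∀ x0 : EuclideanSpace ℝ (Fin d), Measurable (fun z => j x0 z) := fun x0 => hjm.of_uncurry_left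
  have hindm : Measurable ind := (measurable_const (a := (1:ℝ))).indicator measurableSet_closedBall
  have hfm : ∀ k, Measurable (f k) := by
    intro k
    refine (((hφm k).comp (measurable_const.add (hjsec (xk k)))).sub measurable_const).sub ?_
    exact (measurable_const.inner (hjsec (xk k))).mul hindm
  have hgm : Measurable g := by
    refine ((hφbarm.comp (measurable_const.add (hjsec x))).sub measurable_const).sub ?_
    exact (measurable_const.inner (hjsec x)).mul hindm
  have hfb : ∀ k z, |f k z| ≤ M := fun k z => hbound (φk k) (hC k) (pk k) (hPk k) (xk k) z
  have hgb : ∀ z, |g z| ≤ M := fun z => hbound φbar hφbarabs p hPp x z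
  have hgint : Integrable g (μ.restrict S) :=
    (integrable_const M).mono' hgm.aestronglyMeasurable
      (Eventually.of_forall fun z => by rw [Real.norm_eq_abs]; exact hgb z)
  -- pointwise limsup inequality
  have hpt : ∀ z, Filter.limsup (fun k => f k z) Filter.atTop ≤ g z := by
    intro z
    set e : ℕ → ℝ := fun k => -(φk k (xk k)) + -(⟪pk k, j (xk k) z⟫ * ind z) with he
    have hjt : Tendsto (fun k => j (xk k) z) atTop (𝓝 (j x z)) :=
      ((hjc z).tendsto x).comp hx
    have hinz : Tendsto (fun k => ⟪pk k, j (xk k) z⟫) atTop (𝓝 (⟪p, j x z⟫)) :=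
      hp.inner hjt
    have het : Tendsto e atTop (𝓝 (-(φbar x) + -(⟪p, j x z⟫ * ind z))) :=
      (hconv.neg).add ((hinz.mul_const (ind z)).neg)
    have hyk : Tendsto (fun k => xk k + j (xk k) z) atTop (𝓝 (x + j x z)) := hx.add hjt
    have hψ : Tendsto (fun k => (k, xk k + j (xk k) z)) atTop (atTop ×ˢ 𝓝 (x + j x z)) :=
      tendsto_id.prodMk hyk
    have heq : ∀ k, f k z = Φ (k, xk k + j (xk k) z) + e k := fun k => by
      simp only [hf, hΦ, he]; ring
    calc Filter.limsup (fun k => f k z) Filter.atTop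
        = Filter.limsup (fun k => Φ (k, xk k + j (xk k) z) + e k) Filter.atTop :=
          limsup_congr (Eventually.of_forall heq)
      _ ≤ Filter.limsup (fun k => Φ (k, xk k + j (xk k) z)) Filter.atTop
            + (-(φbar x) + -(⟪p, j x z⟫ * ind z)) :=
          limsup_add_tendsto_le (fun k => hΦabs _) het
      _ ≤ Filter.limsup Φ (atTop ×ˢ 𝓝 (x + j x z))
            + (-(φbar x) + -(⟪p, j x z⟫ * ind z)) :=
          add_le_add_left (limsup_comp_le _ hψ Φ C hΦabs) _
      _ = g z := by rw [← hφb' (x + j x z), hg]; ring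
  -- conclude
  have hI2k : ∀ k, I2 μ j δ (xk k) (pk k) (φk k) = ∫ z, f k z ∂(μ.restrict S) := fun k => rfl
  have hI2 : I2 μ j δ x p φbar = ∫ z, g z ∂(μ.restrict S) := rfl
  simp only [hI2k, hI2]
  exact revFatou (μ.restrict S) f g M hfm hfb hgint hpt
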